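/- Let G₁ ≤ S_{n₁} and G₂ ≤ S_{n₂} be transitive nilpotent permutation groups of coprime orders with n₁, n₂ > 1, and let G = G₁ × G₂ ≤ S_{n₁n₂} be the natural (product-action) direct product acting on {1,…,n₁} × {1,…,n₂}. Then the two numbers a(G₁)/n₂ and a(G₂)/n₁ are distinct, where a(H) = 1/ind(H). -/
import Mathlib


/-- The index `ind(g) = n − (number of orbits of ⟨g⟩)` of a permutation `g` of
`Fin n`. -/
noncomputable def permInd {n : ℕ} (g : Equiv.Perm (Fin n)) : ℕ :=
  n - Nat.card (Quotient (MulAction.orbitRel (Subgroup.zpowers g) (Fin n)))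

/-- `ind(G) = min_{1 ≠ g ∈ G} ind(g)` for `G ≤ S_n`. -/
noncomputable def permIndG {n : ℕ} (G : Subgroup (Equiv.Perm (Fin n))) : ℕ :=
  sInf {m | ∃ g : Equiv.Perm (Fin n), g ∈ G ∧ g ≠ 1 ∧ permInd g = m}

lemma permInd_pos {n : ℕ} (g : Equiv.Perm (Fin n)) (hg : g ≠ 1) : 0 < permInd g := by
  classical
  obtain ⟨x, hx⟩ : ∃ x : Fin n, g x ≠ x := by
    by_contra h
    push_neg at h
    exact hg (Equiv.ext h)
  have : Nat.card (Quotient (MulAction.orbitRel (Subgroup.zpowers g) (Fin n))) < n := by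
    have hfin : Fintype (Quotient (MulAction.orbitRel (Subgroup.zpowers g) (Fin n))) :=
      Fintype.ofFinite _
    rw [Nat.card_eq_fintype_card]
    have := Fintype.card_lt_of_surjective_not_injective
      (Quotient.mk (MulAction.orbitRel (Subgroup.zpowers g) (Fin n)))
      Quotient.mk''_surjective (fun hinj => by
        have : g x = x := by
          have h1 : (Quotient.mk (MulAction.orbitRel (Subgroup.zpowers g) (Fin n)) (g x))
              = Quotient.mk _ x := by
            apply Quotient.sound
            exact ⟨⟨g, Subgroup.mem_zpowers g⟩, rfl⟩
          exact hinj h1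
        exact hx this)
    simpa using this
  unfold permInd
  omega

lemma permIndG_mem {n : ℕ} (hn : 1 < n) (G : Subgroup (Equiv.Perm (Fin n)))
    (htrans : MulAction.IsPretransitive G (Fin n)) :
    0 < permIndG G ∧ permIndG G < n := by
  -- find a nontrivial element
  have h0 : (⟨0, by omega⟩ : Fin n) ≠ ⟨1, by omega⟩ := by
    simp [Fin.ext_iff]
  obtain ⟨g, hg⟩ := htrans.exists_smul_eq (⟨0, by omega⟩ : Fin n) ⟨1, by omega⟩
  have hgne : (g : Equiv.Perm (Fin n)) ≠ 1 := by
    intro h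
    have : (g : Equiv.Perm (Fin n)) (⟨0, by omega⟩ : Fin n) = ⟨1, by omega⟩ := hg
    rw [h] at this
    exact h0 this
  have hne : {m | ∃ g' : Equiv.Perm (Fin n), g' ∈ G ∧ g' ≠ 1 ∧ permInd g' = m}.Nonempty :=
    ⟨permInd (g : Equiv.Perm (Fin n)), g, g.2, hgne, rfl⟩
  obtain ⟨g', hg'G, hg'ne, hg'eq⟩ := Nat.sInf_mem hne
  constructor
  · rw [permIndG, ← hg'eq] at *
    exact hg'eq ▸ permInd_pos g' hg'ne
  · have : permIndG G = permInd g' := hg'eq.symm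
    rw [this]
    haveI : Nonempty (Quotient (MulAction.orbitRel (Subgroup.zpowers g') (Fin n))) :=
      ⟨Quotient.mk _ (⟨0, by omega⟩ : Fin n)⟩
    have hq : 0 < Nat.card (Quotient (MulAction.orbitRel (Subgroup.zpowers g') (Fin n))) :=
      Nat.card_pos
    unfold permInd
    omega

lemma card_dvd_of_transitive {n : ℕ} (hn : 0 < n) (G : Subgroup (Equiv.Perm (Fin n)))
    (htrans : MulAction.IsPretransitive G (Fin n)) : n ∣ Nat.card G := by
  have x : Fin n := ⟨0, hn⟩
  have h := MulAction.index_stabilizer_of_transitive G x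
  have hd := Subgroup.index_dvd_card (MulAction.stabilizer G x)
  rw [h] at hd
  simpa using hd

/-- for transitive nilpotent permutation groups `G₁ ≤ S_{n₁}`,
`G₂ ≤ S_{n₂}` of coprime orders with `n₁, n₂ > 1`, the numbers `a(G₁)/n₂` and
`a(G₂)/n₁` are distinct, where `a(H) = ind(H)⁻¹`. -/
theorem stmt9 (n₁ n₂ : ℕ) (hn₁ : 1 < n₁) (hn₂ : 1 < n₂)
    (G₁ : Subgroup (Equiv.Perm (Fin n₁))) (G₂ : Subgroup (Equiv.Perm (Fin n₂)))
    (htrans₁ : MulAction.IsPretransitive G₁ (Fin n₁))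
    (htrans₂ : MulAction.IsPretransitive G₂ (Fin n₂))
    (hnil₁ : Group.IsNilpotent G₁) (hnil₂ : Group.IsNilpotent G₂)
    (hcop : Nat.Coprime (Nat.card G₁) (Nat.card G₂)) :
    ((1 : ℚ) / permIndG G₁) / n₂ ≠ ((1 : ℚ) / permIndG G₂) / n₁ := by
  obtain ⟨ha1, ha2⟩ := permIndG_mem hn₁ G₁ htrans₁
  obtain ⟨hb1, hb2⟩ := permIndG_mem hn₂ G₂ htrans₂
  set a := permIndG G₁
  set b := permIndG G₂
  have hcopn : Nat.Coprime n₁ n₂ :=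
    Nat.Coprime.coprime_dvd_right (card_dvd_of_transitive (by omega) G₂ htrans₂)
      (Nat.Coprime.coprime_dvd_left (card_dvd_of_transitive (by omega) G₁ htrans₁) hcop)
  intro h
  -- cross-multiply: from 1/(a n₂) = 1/(b n₁) get b n₁ = a n₂
  have ha0 : (a : ℚ) ≠ 0 := Nat.cast_ne_zero.mpr (by omega)
  have hb0 : (b : ℚ) ≠ 0 := Nat.cast_ne_zero.mpr (by omega)
  have hn10 : (n₁ : ℚ) ≠ 0 := Nat.cast_ne_zero.mpr (by omega)
  have hn20 : (n₂ : ℚ) ≠ 0 := Nat.cast_ne_zero.mpr (by omega)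
  have hq : (b : ℚ) * n₁ = a * n₂ := by
    field_simp at h
    linarith [h]
  have hN : b * n₁ = a * n₂ := by
    exact_mod_cast hq
  have hdvd : n₁ ∣ a := by
    have : n₁ ∣ a * n₂ := ⟨b, by rw [← hN]; ring⟩
    exact (Nat.Coprime.dvd_of_dvd_mul_right hcopn) this
  have := Nat.le_of_dvd ha1 hdvd
  omega
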